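/- Let A, A_k, Â_k ∈ ℝ^{n×n}, b ∈ ℝ^n, 0 < c_sat < 1 and α ≥ 0. Suppose x_k ∈ ℝ^n satisfies the inexact-solve condition ‖b − A_k x_k‖₂ ≤ α ‖(A_k − Â_k) x_k‖₂ and the saturation assumption ‖Â_k x_k − A x_k‖₂ ≤ c_sat ‖A_k x_k − A x_k‖₂ holds. Then the residual of the true system satisfies ‖b − A x_k‖₂ ≤ ((1 + α(1 + c_sat))/(1 − c_sat)) ‖(A_k − Â_k) x_k‖₂. -/

import Mathlib

/-!
Split `b - A x = (b - Aₖ x) + (Aₖ x - Âₖ x) + (Âₖ x - A x)`. The last term is at most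
`c ‖Aₖ x - A x‖ ≤ c (‖Aₖ x - b‖ + ‖b - A x‖)` by saturation, so together with the solver
condition `‖b - A x‖ ≤ (1 + α (1 + c)) ‖Aₖ x - Âₖ x‖ + c ‖b - A x‖`, and the last summand is
absorbed into the left-hand side because `c < 1`.
-/

theorem norm_sub_le_of_solve_of_saturation {E : Type*} [SeminormedAddCommGroup E]
    {b y z w : E} {c α : ℝ} (hc0 : 0 ≤ c) (hc1 : c < 1)
    (hsolve : ‖b - y‖ ≤ α * ‖y - z‖) (hsat : ‖z - w‖ ≤ c * ‖y - w‖) :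
    ‖b - w‖ ≤ (1 + α * (1 + c)) / (1 - c) * ‖y - z‖ := by
  have hsplit : ‖b - w‖ ≤ ‖b - y‖ + ‖y - z‖ + ‖z - w‖ :=
    (norm_sub_le_norm_sub_add_norm_sub b z w).trans
      (add_le_add_left (norm_sub_le_norm_sub_add_norm_sub b y z) _)
  have hsat' : ‖z - w‖ ≤ c * (‖b - y‖ + ‖b - w‖) :=
    hsat.trans <| mul_le_mul_of_nonneg_left
      (by simpa only [norm_sub_rev y b] using norm_sub_le_norm_sub_add_norm_sub y b w) hc0
  have habsorb : (1 - c) * ‖b - w‖ ≤ (1 + α * (1 + c)) * ‖y - z‖ := by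
    linarith [mul_le_mul_of_nonneg_left hsolve hc0]
  rw [div_mul_eq_mul_div, le_div_iff₀ (sub_pos.mpr hc1), mul_comm]
  exact habsorb

theorem stmt_6_general (n : ℕ)
    (A Ak Ahk : EuclideanSpace ℝ (Fin n) →L[ℝ] EuclideanSpace ℝ (Fin n))
    (b xk : EuclideanSpace ℝ (Fin n)) (csat α : ℝ)
    (hc0 : 0 < csat) (hc1 : csat < 1)
    (hsolve : ‖b - Ak xk‖ ≤ α * ‖Ak xk - Ahk xk‖)
    (hsat : ‖Ahk xk - A xk‖ ≤ csat * ‖Ak xk - A xk‖) :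
    ‖b - A xk‖ ≤ (1 + α * (1 + csat)) / (1 - csat) * ‖Ak xk - Ahk xk‖ :=
  norm_sub_le_of_solve_of_saturation hc0.le hc1 hsolve hsat

/-- Reliability, first inequality: under the inexact-solve condition and the
saturation assumption, `‖b - A x_k‖ ≤ ((1 + α(1+c_sat))/(1-c_sat)) ‖(A_k - Â_k) x_k‖`. -/
theorem stmt_6 (n : ℕ)
    (A Ak Ahk : EuclideanSpace ℝ (Fin n) →L[ℝ] EuclideanSpace ℝ (Fin n))
    (b xk : EuclideanSpace ℝ (Fin n)) (csat α : ℝ)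
    (hc0 : 0 < csat) (hc1 : csat < 1) (hα : 0 ≤ α)
    (hsolve : ‖b - Ak xk‖ ≤ α * ‖Ak xk - Ahk xk‖)
    (hsat : ‖Ahk xk - A xk‖ ≤ csat * ‖Ak xk - A xk‖) :
    ‖b - A xk‖ ≤ (1 + α * (1 + csat)) / (1 - csat) * ‖Ak xk - Ahk xk‖ :=
  stmt_6_general n A Ak Ahk b xk csat α hc0 hc1 hsolve hsat
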